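/- arXiv:2203.13969 — 2 statements merged into one kernel-verified Lean document; each statement's English description precedes it below -/
import Mathlib

section
/- Let V be a finite set and let I ⊆ {0,1}^V be downward closed with respect to the componentwise order, with feasible set F := {0,1}^V \ I. Let β'^{(1)}, …, β'^{(K)} ∈ I and let S := {β ∈ {0,1}^V : for every k there exists u ∈ V with β'^{(k)}_u = 0 and β_u = 1} be the set of binary vectors satisfying all K No-Good constraints. Then F ⊆ S; consequently, if β* minimizes Σ_{u∈V} β_u over S and β* ∈ F, then Σ_{u∈V} β*_u = min_{β ∈ F} Σ_{u∈V} β_u, i.e., β* is an optimal feasible placement. -/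
theorem Pi.bool_exists_of_not_le {V : Type*} {β β' : V → Bool} (h : ¬ β ≤ β') :
    ∃ u, β' u = false ∧ β u = true := by
  obtain ⟨u, hu⟩ := not_forall.mp (mt Pi.le_def.mpr h)
  exact ⟨u, Bool.lt_iff.mp (not_le.mp hu)⟩

theorem IsLowerSet.exists_noGood_of_notMem {V : Type*} {I : Set (V → Bool)} (hI : IsLowerSet I)
    {β β' : V → Bool} (hβ' : β' ∈ I) (hβ : β ∉ I) : ∃ u, β' u = false ∧ β u = true :=
  Pi.bool_exists_of_not_le fun hle => hβ (hI hle hβ')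

/-- The feasible set `F = {0,1}^V \ I` is contained in the set `S`
of binary vectors satisfying the No-Good constraints of any infeasible
placements `β'⁽¹⁾,…,β'⁽ᴷ⁾ ∈ I`; hence a minimizer of `Σ_u β_u` over `S` that
happens to be feasible is an optimal feasible placement. -/
theorem noGood_relaxation_optimality {V : Type*} [Fintype V] (I : Set (V → Bool))
    (hdc : ∀ β β' : V → Bool, β' ∈ I → β ≤ β' → β ∈ I)
    (K : ℕ) (β' : Fin K → V → Bool) (hβ' : ∀ k, β' k ∈ I)
    (S : Set (V → Bool))
    (hS : S = {β | ∀ k : Fin K, ∃ u : V, β' k u = false ∧ β u = true}) :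
    (∀ β : V → Bool, β ∉ I → β ∈ S) ∧
    (∀ βstar : V → Bool, βstar ∈ S → βstar ∉ I →
      (∀ β ∈ S, (∑ u : V, if βstar u then 1 else 0 : ℕ) ≤
        ∑ u : V, if β u then 1 else 0) →
      ∀ β : V → Bool, β ∉ I →
        (∑ u : V, if βstar u then 1 else 0 : ℕ) ≤ ∑ u : V, if β u then 1 else 0) := by
  have hI : IsLowerSet I := fun _ _ hle hmem => hdc _ _ hmem hle
  have feasible_subset : ∀ β : V → Bool, β ∉ I → β ∈ S := by
    subst hS
    exact fun β hβ k => hI.exists_noGood_of_notMem (hβ' k) hβ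
  exact ⟨feasible_subset, fun _ _ _ hmin β hβ => hmin β (feasible_subset β hβ)⟩
end

section
/- Let f, f_max, γ, M be real numbers with f_max > 0, γ > 0, and M > |f|/f_max + γ. Suppose π_p, π_n ∈ {0,1} satisfy −M·(1 − π_p) < f/f_max − γ ≤ M·π_p and −M·(1 − π_n) < −f/f_max − γ ≤ M·π_n. Then π_p·π_n = 0 (so π_p + π_n ∈ {0,1}), and π_p + π_n = 1 if and only if |f| > γ·f_max. -/
/-! A binary `π` subject to `-M (1 - π) < t ≤ M π` is forced to `0` when `t ≤ 0` and to `1`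
when `0 < t`, so it is the indicator of `0 < t`. Applied to `t = ±f / f_max - γ`, `π_p` and `π_n`
indicate `f > γ f_max` and `-f > γ f_max`; these cannot hold together since `γ f_max > 0`, and their
disjunction is `|f| > γ f_max`. -/

theorem bigM_indicator_eq_one_iff {R : Type*} [Ring R] [LinearOrder R] [IsStrictOrderedRing R]
    {π t M : R} (hπ : π = 0 ∨ π = 1) (hlow : -M * (1 - π) < t) (hup : t ≤ M * π) :
    π = 1 ↔ 0 < t := by
  rcases hπ with rfl | rfl
  · simp only [mul_zero] at hup
    simp only [zero_ne_one, false_iff, not_lt, hup]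
  · simp only [sub_self, mul_zero] at hlow
    simp only [hlow]

theorem binary_mul_eq_zero {R : Type*} [MulZeroOneClass R] {a b : R} (ha : a = 0 ∨ a = 1) (hb : b = 0 ∨ b = 1)
    (hab : ¬(a = 1 ∧ b = 1)) : a * b = 0 := by
  rcases ha with rfl | rfl <;> rcases hb with rfl | rfl <;> simp_all

theorem binary_add_eq_one_iff {R : Type*} [AddMonoidWithOne R] [CharZero R] {a b : R} (ha : a = 0 ∨ a = 1) (hb : b = 0 ∨ b = 1)
    (hab : ¬(a = 1 ∧ b = 1)) : a + b = 1 ↔ a = 1 ∨ b = 1 := by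
  rcases ha with rfl | rfl <;> rcases hb with rfl | rfl <;> simp_all

theorem tripping_indicator_linearization_general (f fmax γ M πp πn : ℝ)
    (hfmax : 0 < fmax) (hγ : 0 < γ)
    (hπp : πp = 0 ∨ πp = 1) (hπn : πn = 0 ∨ πn = 1)
    (h1 : -M * (1 - πp) < f / fmax - γ) (h2 : f / fmax - γ ≤ M * πp)
    (h3 : -M * (1 - πn) < -f / fmax - γ) (h4 : -f / fmax - γ ≤ M * πn) :
    πp * πn = 0 ∧ (πp + πn = 1 ↔ |f| > γ * fmax) := by
  have hp : πp = 1 ↔ γ * fmax < f := by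
    rw [bigM_indicator_eq_one_iff hπp h1 h2, sub_pos, lt_div_iff₀ hfmax]
  have hn : πn = 1 ↔ γ * fmax < -f := by
    rw [bigM_indicator_eq_one_iff hπn h3 h4, sub_pos, lt_div_iff₀ hfmax]
  have hexcl : ¬(πp = 1 ∧ πn = 1) := fun ⟨hp1, hn1⟩ => by
    linarith [hp.mp hp1, hn.mp hn1, mul_pos hγ hfmax]
  refine ⟨binary_mul_eq_zero hπp hπn hexcl, ?_⟩
  rw [binary_add_eq_one_iff hπp hπn hexcl, hp, hn, gt_iff_lt, lt_abs]

/-- correctness of the big-M linearization of the overload-induced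
tripping indicator: `π_p·π_n = 0` and `π_p + π_n = 1 ↔ |f| > γ·f_max`. -/
theorem tripping_indicator_linearization (f fmax γ M πp πn : ℝ)
    (hfmax : 0 < fmax) (hγ : 0 < γ) (hM : |f| / fmax + γ < M)
    (hπp : πp = 0 ∨ πp = 1) (hπn : πn = 0 ∨ πn = 1)
    (h1 : -M * (1 - πp) < f / fmax - γ) (h2 : f / fmax - γ ≤ M * πp)
    (h3 : -M * (1 - πn) < -f / fmax - γ) (h4 : -f / fmax - γ ≤ M * πn) :
    πp * πn = 0 ∧ (πp + πn = 1 ↔ |f| > γ * fmax) :=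
  tripping_indicator_linearization_general f fmax γ M πp πn hfmax hγ hπp hπn h1 h2 h3 h4
end
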